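/- arXiv:2006.14243 — 6 statements merged into one kernel-verified Lean document; each statement's English description precedes it below -/
import Mathlib

section
/- If Q is submodular (Q(x',y') + Q(x,y) ≤ Q(x',y) + Q(x,y') for x ≤ x', y ≤ y'), then the reversing permutation σ(i) = n+1−i (negative sorting) maximizes ∑ᵢ Q(xᵢ, y_{σ(i)}) over all permutations, where x₁ ≤ ... ≤ xₙ and y₁ ≤ ... ≤ yₙ. -/
/-!
Swapping the partners of two firms `i`, `j` with `x i ≤ x j` so that the larger firm gets the
partner with the smaller `g`-value does not decrease output: this is exactly submodularity.
If `τ ≠ 1`, let `i` be the least index moved by `τ`; then `i < τ i` and `i < τ⁻¹ i`, so handing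
firm `i` the partner `i` and firm `τ⁻¹ i` the partner `τ i` is such a swap, and it shrinks the
support of `τ`. By induction on the support, matching a monotone `x` with an antitone `g` by the
identity is optimal; the theorem is the case `g i = y (rev i)`.
-/

open Finset Equiv

def Submodular {α β M : Type*} [LE α] [LE β] [Add M] [LE M] (Q : α → β → M) : Prop :=
  ∀ a a' b b', a ≤ a' → b ≤ b' → Q a' b' + Q a b ≤ Q a' b + Q a b'

section Rearrangement

variable {ι α β M : Type*} [Fintype ι] [DecidableEq ι] [Preorder α] [Preorder β]
  [AddCommMonoid M] [PartialOrder M] [IsOrderedAddMonoid M]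
  {Q : α → β → M} {x : ι → α} {g : ι → β}

theorem Submodular.sum_le_sum_mul_swap (hQ : Submodular Q) (τ : Perm ι) {i j : ι}
    (hx : x i ≤ x j) (hg : g (τ i) ≤ g (τ j)) :
    ∑ k, Q (x k) (g (τ k)) ≤ ∑ k, Q (x k) (g ((τ * swap i j) k)) := by
  rcases eq_or_ne i j with rfl | hij
  · simp
  have hpair : ∀ f : ι → M, ∑ k, f k = f i + f j + ∑ k ∈ {i, j}ᶜ, f k := fun f => by
    rw [← sum_pair hij, sum_add_sum_compl]
  have hrest : ∀ k ∈ ({i, j} : Finset ι)ᶜ, (τ * swap i j) k = τ k := fun k hk => by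
    simp only [mem_compl, mem_insert, mem_singleton, not_or] at hk
    simp [swap_apply_of_ne_of_ne hk.1 hk.2]
  rw [hpair, hpair, sum_congr rfl fun k hk => congrArg (fun m => Q (x k) (g m)) (hrest k hk)]
  gcongr ?_ + _
  simpa [add_comm] using hQ _ _ _ _ hx hg

variable [LinearOrder ι]

theorem Submodular.sum_comp_perm_le_sum (hQ : Submodular Q) (hx : Monotone x) (hg : Antitone g)
    (τ : Perm ι) : ∑ k, Q (x k) (g (τ k)) ≤ ∑ k, Q (x k) (g k) := by
  induction hc : τ.support.card using Nat.strong_induction_on generalizing τ with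
  | _ c ih =>
  subst hc
  obtain rfl | hτ := eq_or_ne τ 1
  · simp
  have hne : τ.support.Nonempty := by simpa [nonempty_iff_ne_empty] using hτ
  set i := τ.support.min' hne
  have hi : i ∈ τ.support := min'_mem _ hne
  have hτi : i ≤ τ i := min'_le _ _ (Perm.apply_mem_support.mpr hi)
  have hj : i ≤ τ⁻¹ i := min'_le _ _ (Perm.apply_mem_support.mp (by simpa using hi))
  have hswap : τ * swap i (τ⁻¹ i) = swap i (τ i) * τ := by
    rw [mul_swap_eq_swap_mul, swap_comm]; simp
  calc ∑ k, Q (x k) (g (τ k))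
      ≤ ∑ k, Q (x k) (g ((τ * swap i (τ⁻¹ i)) k)) :=
        hQ.sum_le_sum_mul_swap τ (hx hj) (by simpa using hg hτi)
    _ ≤ ∑ k, Q (x k) (g k) :=
        ih _ (hswap ▸ Perm.card_support_swap_mul (Perm.mem_support.mp hi)) _ rfl

end Rearrangement

/-- With sorted scalar types and a submodular output function, the reversing
permutation (negative sorting) maximizes aggregate output. -/
theorem stmt4 (n : ℕ) (Q : ℝ → ℝ → ℝ) (x y : Fin n → ℝ)
    (hx : Monotone x) (hy : Monotone y)
    (hQ : ∀ a a' b b' : ℝ, a ≤ a' → b ≤ b' → Q a' b' + Q a b ≤ Q a' b + Q a b')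
    (σ : Equiv.Perm (Fin n)) :
    ∑ i, Q (x i) (y (σ i)) ≤ ∑ i, Q (x i) (y i.rev) := by
  have hg : Antitone fun i : Fin n => y i.rev := fun _ _ hij => hy (Fin.rev_le_rev.mpr hij)
  simpa using Submodular.sum_comp_perm_le_sum (g := fun i => y i.rev) hQ hx hg (σ.trans Fin.revPerm)
end

section
/- A function Q : ℝᴷ × ℝᴸ → ℝ satisfies the following 'vectorial supermodularity' telescoping identity: for all x, x' ∈ ℝᴷ and y, y' ∈ ℝᴸ, the quantity Q(x,y) + Q(x',y') − Q(x,y') − Q(x',y) equals the sum over i ∈ {1,...,K}, j ∈ {1,...,L} of single-coordinate double differences, where the (i,j) term freezes coordinates x₁,...,x_{i−1} at x, x_{i+1},...,x_K at x', y₁,...,y_{j−1} at y, y_{j+1},...,y_L at y', and takes the double difference in the i-th firm coordinate (between xᵢ and xᵢ') and the j-th worker coordinate (between yⱼ and yⱼ'). Consequently, if Q is i,j pairwise supermodular for every pair (i,j), then Q(x,y) + Q(x',y') ≥ Q(x,y') + Q(x',y) whenever (x,y),(x',y') are coordinatewise weakly concordant, i.e. (xᵢ − xᵢ')(yⱼ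 − yⱼ') ≥ 0 for all i,j. -/
/-!
Order the coordinates and move from `x'` to `x` one coordinate at a time, and likewise from `y'`
to `y`. The double difference of `Q` then telescopes over the resulting grid of hybrid vectors,
and the `(i, j)` cell of the grid is a double difference in the single coordinate pair `(i, j)`,
which is nonnegative by pairwise supermodularity when `(xᵢ - xᵢ')(yⱼ - yⱼ') ≥ 0`.
-/

open Finset

def mixVec {K : ℕ} (x x' : Fin K → ℝ) (i : Fin K) (a : ℝ) : Fin K → ℝ :=
  fun k => if k < i then x k else if k = i then a else x' k

def PairwiseSupermod {K L : ℕ} (Q : (Fin K → ℝ) → (Fin L → ℝ) → ℝ)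
    (i : Fin K) (j : Fin L) : Prop :=
  ∀ (x : Fin K → ℝ) (y : Fin L → ℝ) (a a' b b' : ℝ), a ≤ a' → b ≤ b' →
    Q (Function.update x i a') (Function.update y j b) +
      Q (Function.update x i a) (Function.update y j b') ≤
    Q (Function.update x i a') (Function.update y j b') +
      Q (Function.update x i a) (Function.update y j b)

theorem Finset.sum_range_sum_range_double_diff {M : Type*} [AddCommGroup M] (f : ℕ → ℕ → M)
    (K L : ℕ) :
    ∑ i ∈ range K, ∑ j ∈ range L, (f (i + 1) (j + 1) + f i j - f (i + 1) j - f i (j + 1)) =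
      f K L + f 0 0 - f K 0 - f 0 L := by
  have inner (i : ℕ) :
      ∑ j ∈ range L, (f (i + 1) (j + 1) + f i j - f (i + 1) j - f i (j + 1)) =
        (f (i + 1) L - f i L) - (f (i + 1) 0 - f i 0) := by
    rw [← sum_range_sub fun j => f (i + 1) j - f i j]
    exact sum_congr rfl fun j _ => by abel
  calc _ = ∑ i ∈ range K, ((f (i + 1) L - f (i + 1) 0) - (f i L - f i 0)) :=
        sum_congr rfl fun i _ => by rw [inner]; abel
    _ = _ := by rw [sum_range_sub fun i => f i L - f i 0]; abel

section PrefixHybrid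

variable {α : Type*} {n : ℕ}

def prefixHybrid (u u' : Fin n → α) (m : ℕ) : Fin n → α :=
  fun k => if (k : ℕ) < m then u k else u' k

@[simp]
theorem prefixHybrid_zero (u u' : Fin n → α) : prefixHybrid u u' 0 = u' := by
  funext k; simp [prefixHybrid]

@[simp]
theorem prefixHybrid_self (u u' : Fin n → α) : prefixHybrid u u' n = u := by
  funext k; simp [prefixHybrid]

theorem mixVec_eq_update (x x' : Fin n → ℝ) (i : Fin n) (a : ℝ) :
    mixVec x x' i a = Function.update (prefixHybrid x x' i) i a := by
  funext k
  rcases lt_trichotomy k i with h | rfl | h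
  · simp [mixVec, prefixHybrid, h, h.ne]
  · simp [mixVec]
  · simp [mixVec, prefixHybrid, h.ne', h.not_gt, Fin.val_fin_lt]

theorem mixVec_right_eq_prefixHybrid (x x' : Fin n → ℝ) (i : Fin n) :
    mixVec x x' i (x' i) = prefixHybrid x x' i := by
  simp [mixVec_eq_update, prefixHybrid]

theorem mixVec_left_eq_prefixHybrid_succ (x x' : Fin n → ℝ) (i : Fin n) :
    mixVec x x' i (x i) = prefixHybrid x x' (i + 1) := by
  funext k
  rw [mixVec_eq_update, Function.update_apply]
  split_ifs with h
  · simp [prefixHybrid, h]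
  · simp only [prefixHybrid, Nat.lt_succ_iff_lt_or_eq, Fin.val_eq_val, h, or_false]

end PrefixHybrid

theorem double_diff_eq_sum_mixVec {K L : ℕ} (Q : (Fin K → ℝ) → (Fin L → ℝ) → ℝ)
    (x x' : Fin K → ℝ) (y y' : Fin L → ℝ) :
    Q x y + Q x' y' - Q x y' - Q x' y =
      ∑ i, ∑ j,
        (Q (mixVec x x' i (x i)) (mixVec y y' j (y j)) +
         Q (mixVec x x' i (x' i)) (mixVec y y' j (y' j)) -
         Q (mixVec x x' i (x i)) (mixVec y y' j (y' j)) -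
         Q (mixVec x x' i (x' i)) (mixVec y y' j (y j))) := by
  have h := sum_range_sum_range_double_diff
    (fun m l => Q (prefixHybrid x x' m) (prefixHybrid y y' l)) K L
  simp only [prefixHybrid_zero, prefixHybrid_self, ← Fin.sum_univ_eq_sum_range] at h
  simpa only [mixVec_left_eq_prefixHybrid_succ, mixVec_right_eq_prefixHybrid] using h.symm

theorem PairwiseSupermod.double_diff_nonneg_of_concordant {K L : ℕ}
    {Q : (Fin K → ℝ) → (Fin L → ℝ) → ℝ} {i : Fin K} {j : Fin L} (hQ : PairwiseSupermod Q i j)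
    (z : Fin K → ℝ) (w : Fin L → ℝ)
    {a a' b b' : ℝ} (hab : 0 ≤ (a - a') * (b - b')) :
    0 ≤ Q (Function.update z i a) (Function.update w j b) +
      Q (Function.update z i a') (Function.update w j b') -
      Q (Function.update z i a) (Function.update w j b') -
      Q (Function.update z i a') (Function.update w j b) := by
  rcases lt_trichotomy a a' with ha | rfl | ha
  · have hb : b ≤ b' := by nlinarith
    linarith [hQ z w a a' b b' ha.le hb]
  · simp
  · have hb : b' ≤ b := by nlinarith
    linarith [hQ z w a' a b' b ha.le hb]

/-- The vectorial supermodularity telescoping identity, and its consequence: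
if `Q` is pairwise supermodular in every coordinate pair, then the concordant
pairing weakly dominates the swapped pairing whenever the two couples are
coordinatewise weakly concordant. -/
theorem stmt5 (K L : ℕ) (Q : (Fin K → ℝ) → (Fin L → ℝ) → ℝ)
    (x x' : Fin K → ℝ) (y y' : Fin L → ℝ) :
    (Q x y + Q x' y' - Q x y' - Q x' y =
      ∑ i, ∑ j,
        (Q (mixVec x x' i (x i)) (mixVec y y' j (y j)) +
         Q (mixVec x x' i (x' i)) (mixVec y y' j (y' j)) -
         Q (mixVec x x' i (x i)) (mixVec y y' j (y' j)) -
         Q (mixVec x x' i (x' i)) (mixVec y y' j (y j)))) ∧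
    ((∀ (i : Fin K) (j : Fin L), PairwiseSupermod Q i j) →
      (∀ (i : Fin K) (j : Fin L), 0 ≤ (x i - x' i) * (y j - y' j)) →
      Q x y' + Q x' y ≤ Q x y + Q x' y') := by
  have hsum := double_diff_eq_sum_mixVec Q x x' y y'
  refine ⟨hsum, fun hQ hconc => ?_⟩
  have hcells : 0 ≤ Q x y + Q x' y' - Q x y' - Q x' y :=
    hsum ▸ sum_nonneg fun i _ => sum_nonneg fun j _ => by
      simp only [mixVec_eq_update]
      exact (hQ i j).double_diff_nonneg_of_concordant _ _ (hconc i j)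
  linarith
end

section
/- Let P and N be disjoint subsets of {1,...,K} × {1,...,L} and let Q : ℝᴷ × ℝᴸ → ℝ be P,N modular. If the pair of couples ((x,y),(x',y')) is P,N weak concordant (i.e., (xᵢ−xᵢ')(yⱼ−yⱼ') ≥ 0 for all (i,j) ∈ P and (x_p−x_p')(y_q−y_q') ≤ 0 for all (p,q) ∈ N), then Q(x,y) + Q(x',y') ≥ Q(x,y') + Q(x',y). -/
/-- `Q` is `i,j` pairwise submodular. -/
def PairwiseSubmod {K L : ℕ} (Q : (Fin K → ℝ) → (Fin L → ℝ) → ℝ)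
    (i : Fin K) (j : Fin L) : Prop :=
  ∀ (x : Fin K → ℝ) (y : Fin L → ℝ) (a a' b b' : ℝ), a ≤ a' → b ≤ b' →
    Q (Function.update x i a') (Function.update y j b') +
      Q (Function.update x i a) (Function.update y j b) ≤
    Q (Function.update x i a') (Function.update y j b) +
      Q (Function.update x i a) (Function.update y j b')

/-- `Q` is strictly `i,j` pairwise supermodular. -/
def StrictPairwiseSupermod {K L : ℕ} (Q : (Fin K → ℝ) → (Fin L → ℝ) → ℝ)
    (i : Fin K) (j : Fin L) : Prop :=
  ∀ (x : Fin K → ℝ) (y : Fin L → ℝ) (a a' b b' : ℝ), a < a' → b < b' →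
    Q (Function.update x i a') (Function.update y j b) +
      Q (Function.update x i a) (Function.update y j b') <
    Q (Function.update x i a') (Function.update y j b') +
      Q (Function.update x i a) (Function.update y j b)

/-- `Q` is strictly `i,j` pairwise submodular. -/
def StrictPairwiseSubmod {K L : ℕ} (Q : (Fin K → ℝ) → (Fin L → ℝ) → ℝ)
    (i : Fin K) (j : Fin L) : Prop :=
  ∀ (x : Fin K → ℝ) (y : Fin L → ℝ) (a a' b b' : ℝ), a < a' → b < b' →
    Q (Function.update x i a') (Function.update y j b') +
      Q (Function.update x i a) (Function.update y j b) <
    Q (Function.update x i a') (Function.update y j b) +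
      Q (Function.update x i a) (Function.update y j b')

/-- `Q` is `P,N` modular: pairwise supermodular on `P`, pairwise submodular on
`N`, and pairwise modular (both) outside `P ∪ N`. -/
def PNModular {K L : ℕ} (P N : Set (Fin K × Fin L))
    (Q : (Fin K → ℝ) → (Fin L → ℝ) → ℝ) : Prop :=
  (∀ p ∈ P, PairwiseSupermod Q p.1 p.2) ∧
  (∀ p ∈ N, PairwiseSubmod Q p.1 p.2) ∧
  (∀ p : Fin K × Fin L, p ∉ P → p ∉ N →
    PairwiseSupermod Q p.1 p.2 ∧ PairwiseSubmod Q p.1 p.2)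

/-- `Q` is strictly `P,N` modular. -/
def StrictPNModular {K L : ℕ} (P N : Set (Fin K × Fin L))
    (Q : (Fin K → ℝ) → (Fin L → ℝ) → ℝ) : Prop :=
  (∀ p ∈ P, StrictPairwiseSupermod Q p.1 p.2) ∧
  (∀ p ∈ N, StrictPairwiseSubmod Q p.1 p.2) ∧
  (∀ p : Fin K × Fin L, p ∉ P → p ∉ N →
    PairwiseSupermod Q p.1 p.2 ∧ PairwiseSubmod Q p.1 p.2)

/-- The pair of couples `(x,y), (x',y')` is `P,N` weak concordant. -/
def PNWeakConcordant {K L : ℕ} (P N : Set (Fin K × Fin L))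
    (x : Fin K → ℝ) (y : Fin L → ℝ) (x' : Fin K → ℝ) (y' : Fin L → ℝ) : Prop :=
  (∀ p ∈ P, 0 ≤ (x p.1 - x' p.1) * (y p.2 - y' p.2)) ∧
  (∀ p ∈ N, (x p.1 - x' p.1) * (y p.2 - y' p.2) ≤ 0)

/-- The pair of couples `(x,y), (x',y')` is `P,N` concordant: weak concordant
with at least one strict (nonzero) product. -/
def PNConcordant {K L : ℕ} (P N : Set (Fin K × Fin L))
    (x : Fin K → ℝ) (y : Fin L → ℝ) (x' : Fin K → ℝ) (y' : Fin L → ℝ) : Prop :=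
  PNWeakConcordant P N x y x' y' ∧
  ((∃ p ∈ P, 0 < (x p.1 - x' p.1) * (y p.2 - y' p.2)) ∨
   (∃ p ∈ N, (x p.1 - x' p.1) * (y p.2 - y' p.2) < 0))

/-! Writing `x'` and `x` as the ends of a chain of single-coordinate updates, and likewise for
`y'` and `y`, splits `Q x y + Q x' y' - Q x y' - Q x' y` into a sum of mixed differences of `Q`
in single pairs of coordinates `(i, j)`. Each of these is nonnegative: by weak concordance the
increments in `xᵢ` and `yⱼ` have the sign that pairwise super- or submodularity controls, and
outside `P ∪ N` the pair is modular, so either sign will do. -/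

open Function

theorem le_of_forall_update_le {ι β : Type*} {α : ι → Type*} [Fintype ι] [DecidableEq ι]
    [Preorder β] (g : (∀ i, α i) → β) (x x' : ∀ i, α i)
    (h : ∀ i u, g (update u i (x' i)) ≤ g (update u i (x i))) : g x' ≤ g x := by
  suffices ∀ s : Finset ι, g x' ≤ g (s.piecewise x x') by
    simpa using this Finset.univ
  intro s
  induction s using Finset.induction_on with
  | empty => simp
  | insert i s hi ih =>
    calc g x' ≤ g (s.piecewise x x') := ih
      _ = g (update (s.piecewise x x') i (x' i)) := by
        rw [← Finset.piecewise_eq_of_notMem s x x' hi, update_eq_self]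
      _ ≤ g (update (s.piecewise x x') i (x i)) := h i _
      _ = g ((insert i s).piecewise x x') := by rw [Finset.piecewise_insert]

section

variable {K L : ℕ} {Q : (Fin K → ℝ) → (Fin L → ℝ) → ℝ} {i : Fin K} {j : Fin L}

theorem PairwiseSupermod.swap_le_of_mul_nonneg (h : PairwiseSupermod Q i j) {a a' b b' : ℝ}
    (hab : 0 ≤ (a - a') * (b - b')) (X : Fin K → ℝ) (Y : Fin L → ℝ) :
    Q (update X i a) (update Y j b') + Q (update X i a') (update Y j b) ≤
      Q (update X i a) (update Y j b) + Q (update X i a') (update Y j b') := by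
  rcases mul_nonneg_iff.1 hab with ⟨ha, hb⟩ | ⟨ha, hb⟩
  · exact h X Y a' a b' b (sub_nonneg.1 ha) (sub_nonneg.1 hb)
  · linarith [h X Y a a' b b' (sub_nonpos.1 ha) (sub_nonpos.1 hb)]

theorem PairwiseSubmod.swap_le_of_mul_nonpos (h : PairwiseSubmod Q i j) {a a' b b' : ℝ}
    (hab : (a - a') * (b - b') ≤ 0) (X : Fin K → ℝ) (Y : Fin L → ℝ) :
    Q (update X i a) (update Y j b') + Q (update X i a') (update Y j b) ≤
      Q (update X i a) (update Y j b) + Q (update X i a') (update Y j b') := by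
  rcases mul_nonpos_iff.1 hab with ⟨ha, hb⟩ | ⟨ha, hb⟩
  · linarith [h X Y a' a b b' (sub_nonneg.1 ha) (sub_nonpos.1 hb)]
  · linarith [h X Y a a' b' b (sub_nonpos.1 ha) (sub_nonneg.1 hb)]

variable {P N : Set (Fin K × Fin L)}

theorem PNModular.swap_le_update_update (hQ : PNModular P N Q) {a a' b b' : ℝ}
    (hP : (i, j) ∈ P → 0 ≤ (a - a') * (b - b')) (hN : (i, j) ∈ N → (a - a') * (b - b') ≤ 0)
    (X : Fin K → ℝ) (Y : Fin L → ℝ) :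
    Q (update X i a) (update Y j b') + Q (update X i a') (update Y j b) ≤
      Q (update X i a) (update Y j b) + Q (update X i a') (update Y j b') := by
  by_cases hiP : (i, j) ∈ P
  · exact (hQ.1 _ hiP).swap_le_of_mul_nonneg (hP hiP) X Y
  by_cases hiN : (i, j) ∈ N
  · exact (hQ.2.1 _ hiN).swap_le_of_mul_nonpos (hN hiN) X Y
  obtain ⟨hsup, hsub⟩ := hQ.2.2 (i, j) hiP hiN
  rcases le_total 0 ((a - a') * (b - b')) with hab | hab
  · exact hsup.swap_le_of_mul_nonneg hab X Y
  · exact hsub.swap_le_of_mul_nonpos hab X Y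

theorem PNModular.swap_le_update (hQ : PNModular P N Q) {a a' : ℝ} {y y' : Fin L → ℝ}
    (hP : ∀ j, (i, j) ∈ P → 0 ≤ (a - a') * (y j - y' j))
    (hN : ∀ j, (i, j) ∈ N → (a - a') * (y j - y' j) ≤ 0) (X : Fin K → ℝ) :
    Q (update X i a) y' + Q (update X i a') y ≤ Q (update X i a) y + Q (update X i a') y' := by
  have := le_of_forall_update_le (fun v => Q (update X i a) v - Q (update X i a') v) y y'
    fun j Y => by linarith [hQ.swap_le_update_update (hP j) (hN j) X Y]
  linarith

end

theorem stmt6_general (K L : ℕ) (P N : Set (Fin K × Fin L))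
    (Q : (Fin K → ℝ) → (Fin L → ℝ) → ℝ) (hQ : PNModular P N Q)
    (x x' : Fin K → ℝ) (y y' : Fin L → ℝ)
    (hc : PNWeakConcordant P N x y x' y') :
    Q x y' + Q x' y ≤ Q x y + Q x' y' := by
  have := le_of_forall_update_le (fun u => Q u y - Q u y') x x'
    fun i X => by
      linarith [hQ.swap_le_update (a := x i) (a' := x' i) (fun j => hc.1 (i, j))
        (fun j => hc.2 (i, j)) X]
  linarith

/-- If `Q` is `P,N` modular and the pair of couples is `P,N` weak concordant,
then the concordant pairing weakly dominates the swapped pairing. -/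
theorem stmt6 (K L : ℕ) (P N : Set (Fin K × Fin L)) (hPN : Disjoint P N)
    (Q : (Fin K → ℝ) → (Fin L → ℝ) → ℝ) (hQ : PNModular P N Q)
    (x x' : Fin K → ℝ) (y y' : Fin L → ℝ)
    (hc : PNWeakConcordant P N x y x' y') :
    Q x y' + Q x' y ≤ Q x y + Q x' y' :=
  stmt6_general K L P N Q hQ x x' y y' hc
end

section
/- Let P, N be disjoint subsets of {1,...,K} × {1,...,L} and let Q be strictly P,N modular. If ((x,y),(x',y')) is a P,N concordant pair (P,N weak concordant with at least one inequality strict), then Q(x,y) + Q(x',y') > Q(x,y') + Q(x',y). -/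
open Finset Function

section crossDiff

variable {α β M : Type*}

def crossDiff [AddCommGroup M] (f : α → β → M) (a a' : α) (b b' : β) : M :=
  f a b + f a' b' - f a b' - f a' b

theorem sum_range_sum_range_crossDiff [AddCommGroup M] (g : ℕ → ℕ → M) (m n : ℕ) :
    ∑ i ∈ range m, ∑ j ∈ range n, crossDiff g i (i + 1) j (j + 1) =
      g 0 0 + g m n - g 0 n - g m 0 := by
  have inner : ∀ i, ∑ j ∈ range n, crossDiff g i (i + 1) j (j + 1) =
      (g i 0 - g i n) - (g (i + 1) 0 - g (i + 1) n) := by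
    intro i
    rw [show g i 0 - g i n - (g (i + 1) 0 - g (i + 1) n) =
      (g i 0 - g (i + 1) 0) - (g i n - g (i + 1) n) by abel,
      ← sum_range_sub' (fun j => g i j - g (i + 1) j) n]
    refine sum_congr rfl fun j _ => ?_
    simp only [crossDiff]; abel
  simp only [inner]
  rw [sum_range_sub' (fun i => g i 0 - g i n) m]
  abel

theorem lt_of_crossDiff_nonneg_of_pos [AddCommGroup M] [PartialOrder M] [IsOrderedAddMonoid M]
    {g : ℕ → ℕ → M} {m n : ℕ}
    (hnonneg : ∀ (i : Fin m) (j : Fin n), 0 ≤ crossDiff g i (i + 1) j (j + 1))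
    (hpos : ∃ (i : Fin m) (j : Fin n), 0 < crossDiff g i (i + 1) j (j + 1)) :
    g 0 n + g m 0 < g 0 0 + g m n := by
  have hnonneg' : ∀ i < m, ∀ j < n, 0 ≤ crossDiff g i (i + 1) j (j + 1) :=
    fun i hi j hj => hnonneg ⟨i, hi⟩ ⟨j, hj⟩
  obtain ⟨i, j, hij⟩ := hpos
  have hsum : 0 < ∑ i ∈ range m, ∑ j ∈ range n, crossDiff g i (i + 1) j (j + 1) := by
    refine sum_pos' (fun i hi => sum_nonneg fun j hj => ?_) ⟨i, mem_range.2 i.isLt, ?_⟩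
    · exact hnonneg' i (mem_range.1 hi) j (mem_range.1 hj)
    · exact sum_pos' (fun j hj => hnonneg' i i.isLt j (mem_range.1 hj))
        ⟨j, mem_range.2 j.isLt, hij⟩
  rw [sum_range_sum_range_crossDiff, sub_sub, sub_pos] at hsum
  exact hsum

end crossDiff

section pairwise

variable {K L : ℕ} {Q : (Fin K → ℝ) → (Fin L → ℝ) → ℝ} {i : Fin K} {j : Fin L}

theorem PairwiseSupermod.crossDiff_nonneg (hQ : PairwiseSupermod Q i j)
    (u : Fin K → ℝ) (v : Fin L → ℝ) {a a' b b' : ℝ} (h : 0 ≤ (a - a') * (b - b')) :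
    0 ≤ crossDiff (fun a b => Q (update u i a) (update v j b)) a a' b b' := by
  simp only [crossDiff]
  rcases mul_nonneg_iff.1 h with ⟨ha, hb⟩ | ⟨ha, hb⟩
  · linarith [hQ u v a' a b' b (by linarith) (by linarith)]
  · linarith [hQ u v a a' b b' (by linarith) (by linarith)]

theorem PairwiseSubmod.crossDiff_nonneg (hQ : PairwiseSubmod Q i j)
    (u : Fin K → ℝ) (v : Fin L → ℝ) {a a' b b' : ℝ} (h : (a - a') * (b - b') ≤ 0) :
    0 ≤ crossDiff (fun a b => Q (update u i a) (update v j b)) a a' b b' := by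
  simp only [crossDiff]
  rcases mul_nonpos_iff.1 h with ⟨ha, hb⟩ | ⟨ha, hb⟩
  · linarith [hQ u v a' a b b' (by linarith) (by linarith)]
  · linarith [hQ u v a a' b' b (by linarith) (by linarith)]

theorem StrictPairwiseSupermod.crossDiff_pos (hQ : StrictPairwiseSupermod Q i j)
    (u : Fin K → ℝ) (v : Fin L → ℝ) {a a' b b' : ℝ} (h : 0 < (a - a') * (b - b')) :
    0 < crossDiff (fun a b => Q (update u i a) (update v j b)) a a' b b' := by
  simp only [crossDiff]
  rcases mul_pos_iff.1 h with ⟨ha, hb⟩ | ⟨ha, hb⟩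
  · linarith [hQ u v a' a b' b (by linarith) (by linarith)]
  · linarith [hQ u v a a' b b' (by linarith) (by linarith)]

theorem StrictPairwiseSubmod.crossDiff_pos (hQ : StrictPairwiseSubmod Q i j)
    (u : Fin K → ℝ) (v : Fin L → ℝ) {a a' b b' : ℝ} (h : (a - a') * (b - b') < 0) :
    0 < crossDiff (fun a b => Q (update u i a) (update v j b)) a a' b b' := by
  simp only [crossDiff]
  rcases mul_neg_iff.1 h with ⟨ha, hb⟩ | ⟨ha, hb⟩
  · linarith [hQ u v a' a b b' (by linarith) (by linarith)]
  · linarith [hQ u v a a' b' b (by linarith) (by linarith)]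

-- On a degenerate rectangle (`a = a'` or `b = b'`) both sides coincide.
theorem StrictPairwiseSupermod.pairwiseSupermod (hQ : StrictPairwiseSupermod Q i j) :
    PairwiseSupermod Q i j := by
  intro u v a a' b b' ha hb
  rcases ha.lt_or_eq with ha | rfl
  · rcases hb.lt_or_eq with hb | rfl
    · exact (hQ u v a a' b b' ha hb).le
    · rfl
  · exact (add_comm _ _).le

theorem StrictPairwiseSubmod.pairwiseSubmod (hQ : StrictPairwiseSubmod Q i j) :
    PairwiseSubmod Q i j := by
  intro u v a a' b b' ha hb
  rcases ha.lt_or_eq with ha | rfl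
  · rcases hb.lt_or_eq with hb | rfl
    · exact (hQ u v a a' b b' ha hb).le
    · rfl
  · exact (add_comm _ _).le

end pairwise

section PN

variable {K L : ℕ} {P N : Set (Fin K × Fin L)} {Q : (Fin K → ℝ) → (Fin L → ℝ) → ℝ}
  {x x' : Fin K → ℝ} {y y' : Fin L → ℝ}

theorem StrictPNModular.pnModular (hQ : StrictPNModular P N Q) : PNModular P N Q :=
  ⟨fun p hp => (hQ.1 p hp).pairwiseSupermod, fun p hp => (hQ.2.1 p hp).pairwiseSubmod, hQ.2.2⟩

theorem PNModular.crossDiff_nonneg (hQ : PNModular P N Q) (hc : PNWeakConcordant P N x y x' y')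
    (i : Fin K) (j : Fin L) (u : Fin K → ℝ) (v : Fin L → ℝ) :
    0 ≤ crossDiff (fun a b => Q (update u i a) (update v j b)) (x i) (x' i) (y j) (y' j) := by
  by_cases hP : (i, j) ∈ P
  · exact (hQ.1 _ hP).crossDiff_nonneg u v (hc.1 _ hP)
  by_cases hN : (i, j) ∈ N
  · exact (hQ.2.1 _ hN).crossDiff_nonneg u v (hc.2 _ hN)
  rcases le_total 0 ((x i - x' i) * (y j - y' j)) with h | h
  · exact (hQ.2.2 _ hP hN).1.crossDiff_nonneg u v h
  · exact (hQ.2.2 _ hP hN).2.crossDiff_nonneg u v h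

theorem PNConcordant.exists_crossDiff_pos (hc : PNConcordant P N x y x' y')
    (hQ : StrictPNModular P N Q) : ∃ (i : Fin K) (j : Fin L), ∀ u v,
      0 < crossDiff (fun a b => Q (update u i a) (update v j b)) (x i) (x' i) (y j) (y' j) := by
  rcases hc.2 with ⟨p, hp, h⟩ | ⟨p, hp, h⟩
  · exact ⟨p.1, p.2, fun u v => (hQ.1 p hp).crossDiff_pos u v h⟩
  · exact ⟨p.1, p.2, fun u v => (hQ.2.1 p hp).crossDiff_pos u v h⟩

end PN

section replacePrefix

variable {K : ℕ} {α : Type*}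

def replacePrefix (x x' : Fin K → α) (n : ℕ) : Fin K → α :=
  fun k => if (k : ℕ) < n then x' k else x k

variable (x x' : Fin K → α)

@[simp]
theorem replacePrefix_zero : replacePrefix x x' 0 = x :=
  funext fun _ => if_neg (Nat.not_lt_zero _)

theorem replacePrefix_of_le {n : ℕ} (h : K ≤ n) : replacePrefix x x' n = x' :=
  funext fun k => if_pos (k.isLt.trans_le h)

@[simp]
theorem update_replacePrefix_self (i : Fin K) :
    update (replacePrefix x x' i) i (x i) = replacePrefix x x' i :=
  update_eq_self_iff.2 (if_neg (lt_irrefl _)).symm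

@[simp]
theorem update_replacePrefix_succ (i : Fin K) :
    update (replacePrefix x x' i) i (x' i) = replacePrefix x x' (i + 1) := by
  funext k
  rcases eq_or_ne k i with rfl | hk
  · simp [replacePrefix]
  · have hk' : (k : ℕ) ≠ i := Fin.val_ne_of_ne hk
    simp only [update_of_ne hk, replacePrefix]
    split_ifs <;> first | rfl | omega

end replacePrefix

theorem crossDiff_replacePrefix {K L : ℕ} (Q : (Fin K → ℝ) → (Fin L → ℝ) → ℝ)
    (x x' : Fin K → ℝ) (y y' : Fin L → ℝ) (i : Fin K) (j : Fin L) :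
    crossDiff (fun m n => Q (replacePrefix x x' m) (replacePrefix y y' n)) i (i + 1) j (j + 1) =
      crossDiff (fun a b => Q (update (replacePrefix x x' i) i a) (update (replacePrefix y y' j) j b))
        (x i) (x' i) (y j) (y' j) := by
  simp only [crossDiff, update_replacePrefix_self, update_replacePrefix_succ]

theorem stmt7_general (K L : ℕ) (P N : Set (Fin K × Fin L))
    (Q : (Fin K → ℝ) → (Fin L → ℝ) → ℝ) (hQ : StrictPNModular P N Q)
    (x x' : Fin K → ℝ) (y y' : Fin L → ℝ)
    (hc : PNConcordant P N x y x' y') :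
    Q x y' + Q x' y < Q x y + Q x' y' := by
  obtain ⟨i, j, hij⟩ := hc.exists_crossDiff_pos hQ
  have h := lt_of_crossDiff_nonneg_of_pos
    (g := fun m n => Q (replacePrefix x x' m) (replacePrefix y y' n))
    (fun i j => crossDiff_replacePrefix Q x x' y y' i j ▸
      hQ.pnModular.crossDiff_nonneg hc.1 i j _ _)
    ⟨i, j, crossDiff_replacePrefix Q x x' y y' i j ▸ hij _ _⟩
  simpa only [replacePrefix_zero, replacePrefix_of_le _ _ le_rfl] using h

/-- If `Q` is strictly `P,N` modular and the pair of couples is `P,N`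
concordant, then the concordant pairing strictly dominates the swapped one. -/
theorem stmt7 (K L : ℕ) (P N : Set (Fin K × Fin L)) (hPN : Disjoint P N)
    (Q : (Fin K → ℝ) → (Fin L → ℝ) → ℝ) (hQ : StrictPNModular P N Q)
    (x x' : Fin K → ℝ) (y y' : Fin L → ℝ)
    (hc : PNConcordant P N x y x' y') :
    Q x y' + Q x' y < Q x y + Q x' y' :=
  stmt7_general K L P N Q hQ x x' y y' hc
end

section
/- Every matching distribution satisfying weak P,N sorting satisfies within-group P,N sorting: if no pair of matched couples is N,P concordant, then for any two matched couples (x,y), (x',y') with x_k = x_k' for all k ≠ i and y_l = y_l' for all l ≠ j, one has (xᵢ−xᵢ')(yⱼ−yⱼ') ≥ 0 when (i,j) ∈ P, and (xᵢ−xᵢ')(yⱼ−yⱼ') ≤ 0 when (i,j) ∈ N. -/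
theorem mul_sub_eq_zero_of_eq_off {K L : ℕ} {x x' : Fin K → ℝ} {y y' : Fin L → ℝ}
    {i : Fin K} {j : Fin L} (hx : ∀ k, k ≠ i → x k = x' k) (hy : ∀ l, l ≠ j → y l = y' l)
    {p : Fin K × Fin L} (hp : p ≠ (i, j)) :
    (x p.1 - x' p.1) * (y p.2 - y' p.2) = 0 := by
  by_cases h1 : p.1 = i
  · rw [hy p.2 fun h2 => hp (Prod.ext h1 h2), sub_self, mul_zero]
  · rw [hx p.1 h1, sub_self, zero_mul]

theorem pnWeakConcordant_of_eq_zero_off {K L : ℕ} {P N : Set (Fin K × Fin L)}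
    {x x' : Fin K → ℝ} {y y' : Fin L → ℝ} {q : Fin K × Fin L}
    (hzero : ∀ p, p ≠ q → (x p.1 - x' p.1) * (y p.2 - y' p.2) = 0)
    (hP : q ∈ P → 0 ≤ (x q.1 - x' q.1) * (y q.2 - y' q.2))
    (hN : q ∈ N → (x q.1 - x' q.1) * (y q.2 - y' q.2) ≤ 0) :
    PNWeakConcordant P N x y x' y' := by
  constructor
  · intro p hp
    obtain rfl | hpq := eq_or_ne p q
    · exact hP hp
    · exact (hzero p hpq).ge
  · intro p hp
    obtain rfl | hpq := eq_or_ne p q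
    · exact hN hp
    · exact (hzero p hpq).le

/-- Weak `P,N` sorting implies within-group `P,N` sorting: if a pair of matched
couples is not `N,P` concordant and the couples agree in all coordinates other
than the firm coordinate `i` and the worker coordinate `j`, then the sorting
sign condition holds at `(i,j)`. -/
theorem stmt10 (K L : ℕ) (P N : Set (Fin K × Fin L)) (hPN : Disjoint P N)
    (x x' : Fin K → ℝ) (y y' : Fin L → ℝ)
    (h : ¬ PNConcordant N P x y x' y')
    (i : Fin K) (j : Fin L)
    (hx : ∀ k : Fin K, k ≠ i → x k = x' k)
    (hy : ∀ l : Fin L, l ≠ j → y l = y' l) :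
    ((i, j) ∈ P → 0 ≤ (x i - x' i) * (y j - y' j)) ∧
    ((i, j) ∈ N → (x i - x' i) * (y j - y' j) ≤ 0) := by
  have hzero := fun p => mul_sub_eq_zero_of_eq_off (p := p) hx hy
  constructor
  · intro hP
    by_contra! hneg
    have hN : (i, j) ∉ N := hPN.notMem_of_mem_left hP
    exact h ⟨pnWeakConcordant_of_eq_zero_off hzero (absurd · hN) fun _ => hneg.le,
      Or.inr ⟨(i, j), hP, hneg⟩⟩
  · intro hN
    by_contra! hpos
    have hP : (i, j) ∉ P := hPN.notMem_of_mem_right hN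
    exact h ⟨pnWeakConcordant_of_eq_zero_off hzero (fun _ => hpos.le) (absurd · hP),
      Or.inl ⟨(i, j), hN, hpos⟩⟩
end

section
/- Let Q(x,y) = ∑ₖ∑ₗ θ_{k,l} xₖ yₗ and Q'(x,y) = ∑ₖ∑ₗ β_{k,l} xₖ yₗ be bilinear forms on ℝᴷ × ℝᴸ. Then Q exhibits higher P,N modularity than Q' (the double difference of Q dominates that of Q' on every P,N concordant pair of couples) if and only if θ_{i,j} ≥ β_{i,j} for all (i,j) ∈ P, θ_{i,j} ≤ β_{i,j} for all (i,j) ∈ N, and θ_{i,j} = β_{i,j} for all (i,j) ∉ P ∪ N. -/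
/-!
Both double differences are bilinear in the increments `x - x'` and `y - y'`:
`Δ = ∑ₖₗ cₖₗ (xₖ - x'ₖ)(yₗ - y'ₗ)`. If the coefficient conditions hold, each term of
`Δθ - Δβ` is a product of two factors of equal sign. Conversely, increments supported on a
single coordinate `(i, j)`, with sign `ε = ±1` chosen so that the couple stays concordant,
give `βᵢⱼ ε ≤ θᵢⱼ ε`; disjointness of `P` and `N` leaves the sign `+1` available on `P` and
`-1` on `N`, and both signs are available outside `P ∪ N`.
-/

open Finset

variable {ι κ : Type*}

def doubleDiff (Q : (ι → ℝ) → (κ → ℝ) → ℝ) (x x' : ι → ℝ) (y y' : κ → ℝ) : ℝ :=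
  Q x y + Q x' y' - Q x' y - Q x y'

def HasHigherModularity (P N : Set (ι × κ)) (Q Q' : (ι → ℝ) → (κ → ℝ) → ℝ) : Prop :=
  ∀ (x x' : ι → ℝ) (y y' : κ → ℝ),
    (∀ p ∈ P, 0 ≤ (x p.1 - x' p.1) * (y p.2 - y' p.2)) →
    (∀ p ∈ N, (x p.1 - x' p.1) * (y p.2 - y' p.2) ≤ 0) →
    (∃ k l, (x k - x' k) * (y l - y' l) ≠ 0) →
    doubleDiff Q' x x' y y' ≤ doubleDiff Q x x' y y'

theorem single_apply_mul_single_apply [DecidableEq ι] [DecidableEq κ] (i k : ι) (j l : κ)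
    (a b : ℝ) : (Pi.single i a : ι → ℝ) k * (Pi.single j b : κ → ℝ) l =
      (Pi.single (i, j) (a * b) : ι × κ → ℝ) (k, l) := by
  by_cases hk : k = i <;> by_cases hl : l = j <;> simp [hk, hl]

variable [Fintype ι] [Fintype κ]

def bilinSum (c : ι → κ → ℝ) (x : ι → ℝ) (y : κ → ℝ) : ℝ :=
  ∑ k, ∑ l, c k l * x k * y l

theorem doubleDiff_bilinSum (c : ι → κ → ℝ) (x x' : ι → ℝ) (y y' : κ → ℝ) :
    doubleDiff (bilinSum c) x x' y y' = ∑ k, ∑ l, c k l * ((x k - x' k) * (y l - y' l)) := by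
  simp only [doubleDiff, bilinSum, ← sum_add_distrib, ← sum_sub_distrib]
  exact sum_congr rfl fun k _ => sum_congr rfl fun l _ => by ring

theorem hasHigherModularity_bilinSum_of_le {P N : Set (ι × κ)} {θ β : ι → κ → ℝ}
    (hP : ∀ p ∈ P, β p.1 p.2 ≤ θ p.1 p.2) (hN : ∀ p ∈ N, θ p.1 p.2 ≤ β p.1 p.2)
    (hO : ∀ p, p ∉ P → p ∉ N → θ p.1 p.2 = β p.1 p.2) :
    HasHigherModularity P N (bilinSum θ) (bilinSum β) := by
  intro x x' y y' cP cN _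
  rw [doubleDiff_bilinSum, doubleDiff_bilinSum]
  refine sum_le_sum fun k _ => sum_le_sum fun l _ => ?_
  by_cases hkP : (k, l) ∈ P
  · exact mul_le_mul_of_nonneg_right (hP _ hkP) (cP _ hkP)
  by_cases hkN : (k, l) ∈ N
  · exact mul_le_mul_of_nonpos_right (hN _ hkN) (cN _ hkN)
  rw [hO (k, l) hkP hkN]

section Single

variable [DecidableEq ι] [DecidableEq κ]

theorem doubleDiff_bilinSum_single (c : ι → κ → ℝ) (i : ι) (j : κ) (a b : ℝ) :
    doubleDiff (bilinSum c) (Pi.single i a) 0 (Pi.single j b) 0 = c i j * (a * b) := by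
  simp [doubleDiff_bilinSum, Pi.single_apply]

theorem mul_le_mul_of_hasHigherModularity {P N : Set (ι × κ)} {θ β : ι → κ → ℝ}
    (h : HasHigherModularity P N (bilinSum θ) (bilinSum β)) {i : ι} {j : κ} {ε : ℝ}
    (hε : ε ≠ 0) (hεP : (i, j) ∈ P → 0 ≤ ε) (hεN : (i, j) ∈ N → ε ≤ 0) :
    β i j * ε ≤ θ i j * ε := by
  have hsingle (p : ι × κ) : ((Pi.single i 1 : ι → ℝ) p.1 - (0 : ι → ℝ) p.1) *
      ((Pi.single j ε : κ → ℝ) p.2 - (0 : κ → ℝ) p.2) = (Pi.single (i, j) ε : ι × κ → ℝ) p := by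
    simp [single_apply_mul_single_apply]
  have hdd := h (Pi.single i 1) 0 (Pi.single j ε) 0
    (fun p hp => by
      rw [hsingle]
      by_cases hpij : p = (i, j)
      · subst hpij; simpa using hεP hp
      · simp [hpij])
    (fun p hp => by
      rw [hsingle]
      by_cases hpij : p = (i, j)
      · subst hpij; simpa using hεN hp
      · simp [hpij])
    ⟨i, j, by simpa [single_apply_mul_single_apply] using hε⟩
  simpa [doubleDiff_bilinSum_single] using hdd

end Single

/-- For bilinear forms `Q(x,y) = ∑ θₖₗ xₖ yₗ` and `Q'(x,y) = ∑ βₖₗ xₖ yₗ`,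
`Q` exhibits higher `P,N` modularity than `Q'` iff `θ ≥ β` on `P`, `θ ≤ β` on
`N`, and `θ = β` outside `P ∪ N`. -/
theorem stmt19 (K L : ℕ) (P N : Set (Fin K × Fin L)) (hPN : Disjoint P N)
    (θ β : Fin K → Fin L → ℝ) :
    (let Q : (Fin K → ℝ) → (Fin L → ℝ) → ℝ :=
        fun x y => ∑ k, ∑ l, θ k l * x k * y l
      let Q' : (Fin K → ℝ) → (Fin L → ℝ) → ℝ :=
        fun x y => ∑ k, ∑ l, β k l * x k * y l
      ∀ (x x' : Fin K → ℝ) (y y' : Fin L → ℝ),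
        (∀ p ∈ P, 0 ≤ (x p.1 - x' p.1) * (y p.2 - y' p.2)) →
        (∀ p ∈ N, (x p.1 - x' p.1) * (y p.2 - y' p.2) ≤ 0) →
        (∃ (k : Fin K) (l : Fin L), (x k - x' k) * (y l - y' l) ≠ 0) →
        Q' x y + Q' x' y' - Q' x' y - Q' x y' ≤
          Q x y + Q x' y' - Q x' y - Q x y') ↔
    ((∀ p ∈ P, β p.1 p.2 ≤ θ p.1 p.2) ∧
     (∀ p ∈ N, θ p.1 p.2 ≤ β p.1 p.2) ∧
     (∀ p : Fin K × Fin L, p ∉ P → p ∉ N → θ p.1 p.2 = β p.1 p.2)) := by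
  show HasHigherModularity P N (bilinSum θ) (bilinSum β) ↔ _
  refine ⟨fun h => ⟨fun p hp => ?_, fun p hp => ?_, fun p hp hn => ?_⟩,
    fun ⟨hP, hN, hO⟩ => hasHigherModularity_bilinSum_of_le hP hN hO⟩
  · simpa using mul_le_mul_of_hasHigherModularity h one_ne_zero (fun _ => zero_le_one)
      (fun hn => absurd hn (Set.disjoint_left.mp hPN hp))
  · simpa using mul_le_mul_of_hasHigherModularity h (neg_ne_zero.mpr one_ne_zero)
      (fun hp' => absurd hp (Set.disjoint_left.mp hPN hp')) (fun _ => by norm_num)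
  · have hpos := mul_le_mul_of_hasHigherModularity h one_ne_zero (absurd · hp) (absurd · hn)
    have hneg := mul_le_mul_of_hasHigherModularity h (neg_ne_zero.mpr one_ne_zero)
      (absurd · hp) (absurd · hn)
    linarith
end
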